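/- Let A = [G | t] be a finite camera with center c_A = (-G⁻¹t, 1) and principal ray n_A, let H ∈ GL₄(ℝ) have last row hᵀ, and set δ = det(H⁻¹). Then: (1) the camera AH⁻¹ is finite if and only if hᵀc_A ≠ 0, and in that case its center is c_{AH⁻¹} = (1/(hᵀc_A))·H·c_A; (2) if hᵀc_A ≠ 0, the principal ray of AH⁻¹ is n_{AH⁻¹} = δ·(hᵀc_A)·H⁻ᵀ·n_A; (3) if hᵀc_A ≠ 0, then for all q ∈ ℝ⁴ one has n_{AH⁻¹}ᵀ(Hq) = δ·(hᵀc_A)·(n_Aᵀq). -/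

import Mathlib

open Matrix

noncomputable section

/-- Left 3x3 block `G` of a 3x4 camera matrix `A = [G | t]`. -/
def leftBlock (A : Matrix (Fin 3) (Fin 4) ℝ) : Matrix (Fin 3) (Fin 3) ℝ :=
  Matrix.of fun i j => A i j.castSucc

/-- Last column `t` of a 3x4 camera matrix `A = [G | t]`. -/
def tCol (A : Matrix (Fin 3) (Fin 4) ℝ) : Fin 3 → ℝ := fun i => A i 3

/-- A camera is finite if its left 3x3 block is invertible. -/
def FiniteCam (A : Matrix (Fin 3) (Fin 4) ℝ) : Prop := (leftBlock A).det ≠ 0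

/-- The center `(-G⁻¹ t, 1)` of a finite camera. -/
def camCenter (A : Matrix (Fin 3) (Fin 4) ℝ) : Fin 4 → ℝ :=
  Fin.snoc (-((leftBlock A)⁻¹ *ᵥ tCol A)) 1

/-- The principal ray `det G • (third row of A)`. -/
def principalRay (A : Matrix (Fin 3) (Fin 4) ℝ) : Fin 4 → ℝ :=
  (leftBlock A).det • A 2

/-- `n_∞ = (0,0,0,1)`. -/
def nInf : Fin 4 → ℝ := Fin.snoc (0 : Fin 3 → ℝ) 1

/-- The chiral domain `D_𝒜`: the closure, within `ℝ⁴ ∖ {0}` (i.e. ambient closure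
intersected with `ℝ⁴ ∖ {0}`), of the set of finite vectors (last coordinate nonzero)
having positive depth in every camera of the arrangement. -/
def chiralDomain {m : ℕ} (A : Fin m → Matrix (Fin 3) (Fin 4) ℝ) : Set (Fin 4 → ℝ) :=
  closure {q : Fin 4 → ℝ | nInf ⬝ᵥ q ≠ 0 ∧ ∀ i, 0 < (principalRay (A i) ⬝ᵥ q) * (nInf ⬝ᵥ q)}
    ∩ {q : Fin 4 → ℝ | q ≠ 0}

/-!
The cofactors of the last row of the 4×4 matrix `[A; x]` do not depend on `x` and form a
kernel vector of `A` with last entry `det G`; for a finite camera they are therefore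
`det G • c_A`, so `det [A; x] = det G · (c_A ⬝ x)`. Since `[A H⁻¹; n_∞] = [A; h] H⁻¹`, this gives
`det G' = det G · δ · (h ⬝ c_A)` for the left block `G'` of `A H⁻¹`, which settles finiteness and
the scalar in the principal ray. The center follows because `H c_A` spans the kernel of `A H⁻¹`.
-/

section SnocRows

variable {R α : Type*} {m o : Type*} {n : ℕ}

def snocRows (A : Matrix (Fin n) m α) (x : m → α) : Matrix (Fin (n + 1)) m α :=
  of (Fin.snoc A x)

@[simp]
theorem snocRows_last (A : Matrix (Fin n) m α) (x : m → α) : snocRows A x (Fin.last n) = x :=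
  Fin.snoc_last (α := fun _ => m → α) (p := A) x

@[simp]
theorem snocRows_castSucc (A : Matrix (Fin n) m α) (x : m → α) (i : Fin n) :
    snocRows A x i.castSucc = A i :=
  Fin.snoc_castSucc (α := fun _ => m → α) _ _ _

theorem snocRows_mul [Fintype m] [NonUnitalNonAssocSemiring α] (A : Matrix (Fin n) m α)
    (x : m → α) (M : Matrix m o α) : snocRows (A * M) (x ᵥ* M) = snocRows A x * M := by
  funext i
  rw [mul_apply_eq_vecMul]
  refine Fin.lastCases ?_ (fun i => ?_) i
  · rw [snocRows_last, snocRows_last]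
  · rw [snocRows_castSucc, snocRows_castSucc, mul_apply_eq_vecMul]

variable [CommRing R]

def lastRowCofactors (A : Matrix (Fin n) (Fin (n + 1)) R) : Fin (n + 1) → R :=
  fun j => (-1) ^ (n + j : ℕ) * (A.submatrix id j.succAbove).det

theorem det_snocRows_eq_dotProduct (A : Matrix (Fin n) (Fin (n + 1)) R) (x : Fin (n + 1) → R) :
    (snocRows A x).det = lastRowCofactors A ⬝ᵥ x := by
  rw [det_succ_row _ (Fin.last n), dotProduct]
  refine Finset.sum_congr rfl fun j _ => ?_
  have hminor : (snocRows A x).submatrix (Fin.last n).succAbove j.succAbove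
      = A.submatrix id j.succAbove := by
    ext i k
    rw [submatrix_apply, submatrix_apply, Fin.succAbove_last, snocRows_castSucc, id]
  rw [hminor, snocRows_last, Fin.val_last, lastRowCofactors]
  ring

theorem mulVec_lastRowCofactors (A : Matrix (Fin n) (Fin (n + 1)) R) :
    A *ᵥ lastRowCofactors A = 0 := by
  ext i
  rw [mulVec, dotProduct_comm, ← det_snocRows_eq_dotProduct, Pi.zero_apply]
  exact det_zero_of_row_eq (Fin.castSucc_lt_last i).ne
    ((snocRows_castSucc _ _ _).trans (snocRows_last _ _).symm)

theorem lastRowCofactors_last (A : Matrix (Fin n) (Fin (n + 1)) R) :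
    lastRowCofactors A (Fin.last n) = (A.submatrix id Fin.castSucc).det := by
  rw [lastRowCofactors, Fin.succAbove_last, Fin.val_last, Even.neg_one_pow ⟨n, rfl⟩, one_mul]

end SnocRows

theorem vecMul_nonsing_inv_row {ι R : Type*} [Fintype ι] [DecidableEq ι] [CommRing R]
    (H : Matrix ι ι R) (hH : IsUnit H.det) (i : ι) : H i ᵥ* H⁻¹ = Pi.single i 1 := by
  rw [← mul_apply_eq_vecMul, mul_nonsing_inv _ hH]
  ext j
  exact one_eq_pi_single

theorem mulVec_snoc (A : Matrix (Fin 3) (Fin 4) ℝ) (u : Fin 3 → ℝ) (s : ℝ) :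
    A *ᵥ Fin.snoc u s = leftBlock A *ᵥ u + s • tCol A := by
  ext i
  rw [mulVec, dotProduct, Fin.sum_univ_castSucc]
  simp only [Fin.snoc_castSucc, Fin.snoc_last, Pi.add_apply, Pi.smul_apply, smul_eq_mul,
    mul_comm s]
  rfl

theorem mulVec_camCenter (A : Matrix (Fin 3) (Fin 4) ℝ) (hA : FiniteCam A) :
    A *ᵥ camCenter A = 0 := by
  rw [camCenter, mulVec_snoc, mulVec_neg, mulVec_mulVec,
    mul_nonsing_inv _ (isUnit_iff_ne_zero.mpr hA), one_mulVec, one_smul, neg_add_cancel]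

theorem eq_smul_camCenter_of_mulVec_eq_zero (A : Matrix (Fin 3) (Fin 4) ℝ) (hA : FiniteCam A)
    {v : Fin 4 → ℝ} (hv : A *ᵥ v = 0) : v = v 3 • camCenter A := by
  obtain ⟨u, s, rfl⟩ : ∃ u s, v = Fin.snoc u s := ⟨_, _, (Fin.snoc_init_self v).symm⟩
  rw [mulVec_snoc, add_eq_zero_iff_eq_neg] at hv
  have hu : u = -(s • ((leftBlock A)⁻¹ *ᵥ tCol A)) := by
    rw [← mulVec_smul, ← mulVec_neg, ← hv, mulVec_mulVec,
      nonsing_inv_mul _ (isUnit_iff_ne_zero.mpr hA), one_mulVec]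
  show Fin.snoc (α := fun _ => ℝ) u s = Fin.snoc (α := fun _ => ℝ) u s (Fin.last 3) • camCenter A
  ext j
  refine Fin.lastCases ?_ (fun j => ?_) j <;>
    simp only [camCenter, hu, Fin.snoc_last, Fin.snoc_castSucc, Pi.smul_apply, Pi.neg_apply,
      smul_eq_mul, mul_one, mul_neg]

theorem lastRowCofactors_eq_smul_camCenter (A : Matrix (Fin 3) (Fin 4) ℝ) (hA : FiniteCam A) :
    lastRowCofactors A = (leftBlock A).det • camCenter A := by
  rw [show (leftBlock A).det = lastRowCofactors A 3 from (lastRowCofactors_last A).symm]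
  exact eq_smul_camCenter_of_mulVec_eq_zero A hA (mulVec_lastRowCofactors A)

theorem det_snocRows (A : Matrix (Fin 3) (Fin 4) ℝ) (hA : FiniteCam A) (x : Fin 4 → ℝ) :
    (snocRows A x).det = (leftBlock A).det * (camCenter A ⬝ᵥ x) := by
  rw [det_snocRows_eq_dotProduct, lastRowCofactors_eq_smul_camCenter A hA, smul_dotProduct,
    smul_eq_mul]

theorem nInf_eq_single : nInf = Pi.single 3 1 := by
  ext j
  refine Fin.lastCases ?_ (fun j => ?_) j
  · rw [nInf, Fin.snoc_last]
    rfl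
  · rw [nInf, Fin.snoc_castSucc,
      Pi.single_eq_of_ne (show j.castSucc ≠ 3 from (Fin.castSucc_lt_last j).ne)]
    rfl

theorem det_snocRows_nInf (A : Matrix (Fin 3) (Fin 4) ℝ) :
    (snocRows A nInf).det = (leftBlock A).det := by
  rw [det_snocRows_eq_dotProduct, nInf_eq_single, dotProduct_single, mul_one]
  exact lastRowCofactors_last A

theorem det_leftBlock_mul_inv (A : Matrix (Fin 3) (Fin 4) ℝ) (hA : FiniteCam A)
    (H : Matrix (Fin 4) (Fin 4) ℝ) (hH : IsUnit H.det) :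
    (leftBlock (A * H⁻¹)).det = (leftBlock A).det * H⁻¹.det * (H 3 ⬝ᵥ camCenter A) := by
  rw [← det_snocRows_nInf, nInf_eq_single, ← vecMul_nonsing_inv_row H hH, snocRows_mul,
    det_mul, det_snocRows A hA, dotProduct_comm]
  ring

theorem finiteCam_mul_inv_iff (A : Matrix (Fin 3) (Fin 4) ℝ) (hA : FiniteCam A)
    (H : Matrix (Fin 4) (Fin 4) ℝ) (hH : IsUnit H.det) :
    FiniteCam (A * H⁻¹) ↔ H 3 ⬝ᵥ camCenter A ≠ 0 := by
  rw [FiniteCam, det_leftBlock_mul_inv A hA H hH, mul_ne_zero_iff,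
    and_iff_right (mul_ne_zero hA (isUnit_nonsing_inv_det H hH).ne_zero)]

theorem camCenter_mul_inv (A : Matrix (Fin 3) (Fin 4) ℝ) (hA : FiniteCam A)
    (H : Matrix (Fin 4) (Fin 4) ℝ) (hH : IsUnit H.det) (hc : H 3 ⬝ᵥ camCenter A ≠ 0) :
    camCenter (A * H⁻¹) = (H 3 ⬝ᵥ camCenter A)⁻¹ • (H *ᵥ camCenter A) := by
  have hker : (A * H⁻¹) *ᵥ (H *ᵥ camCenter A) = 0 := by
    rw [mulVec_mulVec, Matrix.mul_assoc, nonsing_inv_mul _ hH, Matrix.mul_one,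
      mulVec_camCenter A hA]
  rw [eq_inv_smul_iff₀ hc]
  exact (eq_smul_camCenter_of_mulVec_eq_zero _ ((finiteCam_mul_inv_iff A hA H hH).mpr hc)
    hker).symm

theorem principalRay_mul_inv (A : Matrix (Fin 3) (Fin 4) ℝ) (hA : FiniteCam A)
    (H : Matrix (Fin 4) (Fin 4) ℝ) (hH : IsUnit H.det) :
    principalRay (A * H⁻¹)
      = (H⁻¹.det * (H 3 ⬝ᵥ camCenter A)) • (H⁻¹ᵀ *ᵥ principalRay A) := by
  rw [principalRay, principalRay, det_leftBlock_mul_inv A hA H hH, mul_apply_eq_vecMul,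
    ← mulVec_transpose, mulVec_smul, smul_smul]
  congr 1
  ring

/-- effect of a homography on a finite camera: with `h` the last row of
`H ∈ GL₄` and `δ = det(H⁻¹)`: (1) `AH⁻¹` is finite iff `hᵀc_A ≠ 0`, in which case its
center is `(1/(hᵀc_A)) • H c_A`; (2) its principal ray is `δ (hᵀc_A) • H⁻ᵀ n_A`;
(3) `n_{AH⁻¹}ᵀ(Hq) = δ (hᵀc_A) (n_Aᵀ q)` for all `q`. -/
theorem camera_homography_transform
    (A : Matrix (Fin 3) (Fin 4) ℝ) (hA : FiniteCam A)
    (H : Matrix (Fin 4) (Fin 4) ℝ) (hH : IsUnit H.det) :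
    (FiniteCam (A * H⁻¹) ↔ H 3 ⬝ᵥ camCenter A ≠ 0) ∧
    (H 3 ⬝ᵥ camCenter A ≠ 0 →
      camCenter (A * H⁻¹) = (H 3 ⬝ᵥ camCenter A)⁻¹ • (H *ᵥ camCenter A) ∧
      principalRay (A * H⁻¹)
        = (H⁻¹.det * (H 3 ⬝ᵥ camCenter A)) • ((H⁻¹).transpose *ᵥ principalRay A) ∧
      ∀ q : Fin 4 → ℝ, principalRay (A * H⁻¹) ⬝ᵥ (H *ᵥ q)
        = H⁻¹.det * (H 3 ⬝ᵥ camCenter A) * (principalRay A ⬝ᵥ q)) := by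
  refine ⟨finiteCam_mul_inv_iff A hA H hH, fun hc =>
    ⟨camCenter_mul_inv A hA H hH hc, principalRay_mul_inv A hA H hH, fun q => ?_⟩⟩
  rw [principalRay_mul_inv A hA H hH, smul_dotProduct, mulVec_transpose, dotProduct_mulVec,
    vecMul_vecMul, nonsing_inv_mul _ hH, vecMul_one, smul_eq_mul]
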